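/- arXiv:2002.09615 — 2 statements merged into one kernel-verified Lean document; each statement's English description precedes it below -/
import Mathlib

section
/- Let U be a d × n real matrix whose columns sum to the zero vector, let P = {(i,j) : 1 ≤ i < j ≤ n}, and let ν ≥ max_{(i,j) ∈ P} ‖U_i − U_j‖_2^2. Then the largest eigenvalue of the real symmetric matrix (1 / C(n,2)) · Σ_{(i,j) ∈ P} ‖U_i − U_j‖_2^2 · (U_i − U_j)(U_i − U_j)^T − (n / C(n,2))^2 · (U U^T)^2 is at most (ν n / C(n,2)) · λ_max(U U^T) + (n^2 / C(n,2)^2) · λ_max(U U^T)^2, where λ_max denotes the largest eigenvalue and C(n,2) = n(n−1)/2. -/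
open Matrix BigOperators Finset

/-!
Evaluate the quadratic form of the matrix at a unit eigenvector `v` and put `f = Uᵀ v`. The
subtracted term is the quadratic form of the positive semidefinite matrix `(U Uᵀ)²`, so it can be
dropped, and the first term is at most `ν / C(n,2) · ∑_{i<j} (f i - f j)²`. By Lagrange's identity
`∑_{i<j} (f i - f j)² = n ‖f‖² - (∑ f i)² ≤ n ‖f‖²`, and `‖f‖² = vᵀ U Uᵀ v ≤ λ_max(U Uᵀ)`.
-/


section PairSums

variable {ι : Type*} [Fintype ι]

theorem sum_sum_sub_sq (f : ι → ℝ) :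
    ∑ i, ∑ j, (f i - f j) ^ 2 = 2 * (Fintype.card ι * ∑ i, f i ^ 2 - (∑ i, f i) ^ 2) := by
  simp only [sub_sq, sum_add_distrib, sum_sub_distrib, sum_const, card_univ, nsmul_eq_mul,
    ← mul_sum, ← sum_mul]
  ring

variable [LinearOrder ι]

theorem sum_sum_eq_two_nsmul_sum_filter_lt {M : Type*} [AddCommMonoid M] (g : ι → ι → M)
    (hsymm : ∀ i j, g i j = g j i) (hdiag : ∀ i, g i i = 0) :
    ∑ i, ∑ j, g i j = 2 • ∑ p ∈ univ.filter (fun p : ι × ι => p.1 < p.2), g p.1 p.2 := by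
  have hsplit : ∀ p : ι × ι,
      g p.1 p.2 = (if p.1 < p.2 then g p.1 p.2 else 0) + (if p.2 < p.1 then g p.2 p.1 else 0) := by
    rintro ⟨i, j⟩
    rcases lt_trichotomy i j with h | rfl | h
    · simp [h, h.not_gt]
    · simp [hdiag]
    · simp [h, h.not_gt, hsymm i j]
  have hswap : ∑ p : ι × ι, (if p.2 < p.1 then g p.2 p.1 else 0)
      = ∑ p : ι × ι, (if p.1 < p.2 then g p.1 p.2 else 0) :=
    Fintype.sum_equiv (Equiv.prodComm ι ι) _ _ fun _ => rfl
  rw [← Fintype.sum_prod_type', Fintype.sum_congr _ _ hsplit, sum_add_distrib, hswap, two_nsmul,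
    sum_filter]

theorem sum_filter_lt_sub_sq (f : ι → ℝ) :
    ∑ p ∈ univ.filter (fun p : ι × ι => p.1 < p.2), (f p.1 - f p.2) ^ 2
      = Fintype.card ι * ∑ i, f i ^ 2 - (∑ i, f i) ^ 2 := by
  have h := sum_sum_eq_two_nsmul_sum_filter_lt (fun i j => (f i - f j) ^ 2)
    (fun i j => by ring) (fun i => by ring)
  rw [sum_sum_sub_sq, two_nsmul] at h
  linarith

theorem sum_filter_lt_sub_sq_le (f : ι → ℝ) :
    ∑ p ∈ univ.filter (fun p : ι × ι => p.1 < p.2), (f p.1 - f p.2) ^ 2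
      ≤ Fintype.card ι * ∑ i, f i ^ 2 := by
  rw [sum_filter_lt_sub_sq]
  linarith [sq_nonneg (∑ i, f i)]

end PairSums

namespace Matrix

variable {ι : Type*} [Fintype ι] [DecidableEq ι]

open scoped MatrixOrder in
theorem IsHermitian.le_algebraMap_iSup_eigenvalues {A : Matrix ι ι ℝ} (hA : A.IsHermitian) :
    A ≤ algebraMap ℝ _ (⨆ i, hA.eigenvalues i) := by
  refine le_algebraMap_of_spectrum_le ?_ hA
  rw [hA.spectrum_real_eq_range_eigenvalues]
  rintro _ ⟨i, rfl⟩
  exact le_ciSup (Finite.bddAbove_range _) i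

open scoped MatrixOrder in
theorem IsHermitian.dotProduct_mulVec_le_iSup_eigenvalues_mul {A : Matrix ι ι ℝ}
    (hA : A.IsHermitian) (x : ι → ℝ) :
    x ⬝ᵥ A *ᵥ x ≤ (⨆ i, hA.eigenvalues i) * (x ⬝ᵥ x) := by
  have := hA.le_algebraMap_iSup_eigenvalues.dotProduct_mulVec_nonneg x
  rw [Algebra.algebraMap_eq_smul_one, sub_mulVec, smul_mulVec, one_mulVec, star_trivial,
    dotProduct_sub, dotProduct_smul, smul_eq_mul] at this
  linarith

theorem IsHermitian.eigenvalues_eq_dotProduct_mulVec {A : Matrix ι ι ℝ} (hA : A.IsHermitian)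
    (i : ι) :
    hA.eigenvalues i = ⇑(hA.eigenvectorBasis i) ⬝ᵥ A *ᵥ ⇑(hA.eigenvectorBasis i) := by
  simpa using hA.eigenvalues_eq i

theorem IsHermitian.dotProduct_eigenvectorBasis_self {A : Matrix ι ι ℝ} (hA : A.IsHermitian)
    (i : ι) : ⇑(hA.eigenvectorBasis i) ⬝ᵥ ⇑(hA.eigenvectorBasis i) = 1 := by
  have h := hA.eigenvectorBasis.inner_eq_one i
  rwa [EuclideanSpace.inner_eq_star_dotProduct, star_trivial] at h

theorem dotProduct_sum_smul_vecMulVec_self_mulVec {R m κ : Type*} [CommRing R] [Fintype m]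
    (s : Finset κ) (w : κ → R) (a : κ → m → R) (v : m → R) :
    v ⬝ᵥ (∑ p ∈ s, w p • vecMulVec (a p) (a p)) *ᵥ v = ∑ p ∈ s, w p * (a p ⬝ᵥ v) ^ 2 := by
  simp only [sum_mulVec, dotProduct_sum, smul_mulVec, vecMulVec_mulVec, op_smul_eq_smul,
    dotProduct_smul, smul_eq_mul, dotProduct_comm v (a _)]
  exact sum_congr rfl fun p _ => by ring

theorem dotProduct_mul_transpose_mulVec {R m k : Type*} [CommSemiring R] [Fintype m] [Fintype k]
    (A : Matrix m k R) (x : m → R) : x ⬝ᵥ (A * Aᵀ) *ᵥ x = (Aᵀ *ᵥ x) ⬝ᵥ (Aᵀ *ᵥ x) := by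
  rw [← mulVec_mulVec, dotProduct_mulVec, ← mulVec_transpose]

end Matrix

theorem stmt4_general {d n : ℕ} (U : Matrix (Fin d) (Fin n) ℝ) (ν : ℝ)
    (hν : ∀ p : Fin n × Fin n, p.1 < p.2 → ∑ i, (U i p.1 - U i p.2) ^ 2 ≤ ν)
    (hM : (((n.choose 2 : ℝ))⁻¹ •
        (∑ p ∈ Finset.univ.filter (fun p : Fin n × Fin n => p.1 < p.2),
          (∑ i, (U i p.1 - U i p.2) ^ 2) •
            vecMulVec ((fun i => U i p.1) - fun i => U i p.2)
              ((fun i => U i p.1) - fun i => U i p.2))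
      - ((n : ℝ) / (n.choose 2 : ℝ)) ^ 2 • (U * Uᵀ * (U * Uᵀ))).IsHermitian)
    (hUU : (U * Uᵀ).IsHermitian) :
    (⨆ i, hM.eigenvalues i)
      ≤ ν * (n : ℝ) / (n.choose 2 : ℝ) * (⨆ i, hUU.eigenvalues i)
        + (n : ℝ) ^ 2 / (n.choose 2 : ℝ) ^ 2 * (⨆ i, hUU.eigenvalues i) ^ 2 := by
  rcases isEmpty_or_nonempty (Fin d) with hd | hd
  · simp [Real.iSup_of_isEmpty]
  refine ciSup_le fun k => ?_
  rw [hM.eigenvalues_eq_dotProduct_mulVec, sub_mulVec, smul_mulVec, smul_mulVec, dotProduct_sub,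
    dotProduct_smul, dotProduct_smul, dotProduct_sum_smul_vecMulVec_self_mulVec, smul_eq_mul,
    smul_eq_mul]
  set v : Fin d → ℝ := ⇑(hM.eigenvectorBasis k)
  set f : Fin n → ℝ := Uᵀ *ᵥ v
  set L := ⨆ i, hUU.eigenvalues i
  have hcol (p : Fin n × Fin n) : ((fun i => U i p.1) - fun i => U i p.2) ⬝ᵥ v = f p.1 - f p.2 :=
    sub_dotProduct _ _ _
  have hfL : ∑ j, f j ^ 2 ≤ L := by
    have h := hUU.dotProduct_mulVec_le_iSup_eigenvalues_mul v
    rw [dotProduct_mul_transpose_mulVec, hM.dotProduct_eigenvectorBasis_self, mul_one] at h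
    simpa only [dotProduct, sq] using h
  have hsq : 0 ≤ v ⬝ᵥ (U * Uᵀ * (U * Uᵀ)) *ᵥ v := by
    simpa [hUU.eq] using (posSemidef_self_mul_conjTranspose (U * Uᵀ)).dotProduct_mulVec_nonneg v
  -- for `n < 2` nothing bounds `ν` from below, but then `C(n,2) = 0`
  have hνC : 0 ≤ ν / (n.choose 2 : ℝ) := by
    rcases lt_or_ge n 2 with hn | hn
    · simp [Nat.choose_eq_zero_of_lt hn]
    · exact div_nonneg ((sum_nonneg fun _ _ => sq_nonneg _).trans
        (hν (⟨0, by omega⟩, ⟨1, by omega⟩) (by simp [Fin.lt_def]))) (Nat.cast_nonneg _)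
  simp only [hcol]
  calc _ ≤ ((n.choose 2 : ℝ))⁻¹ * ∑ p ∈ univ.filter (fun p : Fin n × Fin n => p.1 < p.2),
          ν * (f p.1 - f p.2) ^ 2 := by
        refine (sub_le_self _ (by positivity)).trans (mul_le_mul_of_nonneg_left
          (sum_le_sum fun p hp => ?_) (by positivity))
        exact mul_le_mul_of_nonneg_right (hν p (mem_filter.1 hp).2) (sq_nonneg _)
    _ = ν / (n.choose 2 : ℝ) * ∑ p ∈ univ.filter (fun p : Fin n × Fin n => p.1 < p.2),
          (f p.1 - f p.2) ^ 2 := by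
        rw [← mul_sum]; ring
    _ ≤ ν / (n.choose 2 : ℝ) * (n * L) := by
        refine mul_le_mul_of_nonneg_left ?_ hνC
        simpa using (sum_filter_lt_sub_sq_le f).trans
          (mul_le_mul_of_nonneg_left hfL (Nat.cast_nonneg _))
    _ ≤ _ := by
        rw [mul_div_right_comm, mul_assoc]
        exact le_add_of_nonneg_right (by positivity)

/-- For centered `U` with `‖U_i − U_j‖₂² ≤ ν` on all pairs, the largest
eigenvalue of `(1/C(n,2)) Σ_{i<j} ‖U_i−U_j‖₂² (U_i−U_j)(U_i−U_j)ᵀ − (n/C(n,2))²·(U Uᵀ)²`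
is at most `(νn/C(n,2))·λ_max(U Uᵀ) + (n²/C(n,2)²)·λ_max(U Uᵀ)²`. -/
theorem stmt4 {d n : ℕ} (U : Matrix (Fin d) (Fin n) ℝ) (ν : ℝ)
    (hU : ∑ j : Fin n, (fun i => U i j) = (0 : Fin d → ℝ))
    (hν : ∀ p : Fin n × Fin n, p.1 < p.2 → ∑ i, (U i p.1 - U i p.2) ^ 2 ≤ ν)
    (hM : (((n.choose 2 : ℝ))⁻¹ •
        (∑ p ∈ Finset.univ.filter (fun p : Fin n × Fin n => p.1 < p.2),
          (∑ i, (U i p.1 - U i p.2) ^ 2) •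
            vecMulVec ((fun i => U i p.1) - fun i => U i p.2)
              ((fun i => U i p.1) - fun i => U i p.2))
      - ((n : ℝ) / (n.choose 2 : ℝ)) ^ 2 • (U * Uᵀ * (U * Uᵀ))).IsHermitian)
    (hUU : (U * Uᵀ).IsHermitian) :
    (⨆ i, hM.eigenvalues i)
      ≤ ν * (n : ℝ) / (n.choose 2 : ℝ) * (⨆ i, hUU.eigenvalues i)
        + (n : ℝ) ^ 2 / (n.choose 2 : ℝ) ^ 2 * (⨆ i, hUU.eigenvalues i) ^ 2 :=
  stmt4_general U ν hν hM hUU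
end

section
/- Let U be a d × n real matrix whose columns sum to the zero vector, let P = {(i,j) : 1 ≤ i < j ≤ n}, and suppose ‖U_i − U_j‖_2^2 ≤ ν for all (i,j) ∈ P. Then the largest eigenvalue of the real symmetric positive semidefinite matrix (1 / C(n,2)) · Σ_{(i,j) ∈ P} ‖U_i − U_j‖_2^2 · (U_i − U_j)(U_i − U_j)^T is at most (ν n / C(n,2)) · λ_max(U U^T), where λ_max denotes the largest eigenvalue and C(n,2) = n(n−1)/2. -/
/-!
For every `z`, the quadratic form of the weighted sum is `∑_{i<j} ‖U_i − U_j‖² ((U_i − U_j)·z)²`,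
which is at most `ν ∑_{i<j} ((U_i − U_j)·z)² = ν n zᵀ U Uᵀ z`, the last identity because the
columns of `U` are centred. So the matrix is below `(ν n / C(n,2)) U Uᵀ` in the Loewner order,
and `λ_max` is monotone for that order: an eigenvalue is the quadratic form at a unit eigenvector,
and `zᵀ B z ≤ λ_max(B) ‖z‖²` because `λ_max(B) · 1 − B` is positive semidefinite by the spectral
theorem.
-/

open Matrix Finset
open scoped ComplexOrder

namespace Finset

variable {ι : Type*} [Fintype ι]

lemma sum_prod_sub_mul_sub {R : Type*} [CommRing R] (a b : ι → R) :
    ∑ p : ι × ι, (a p.1 - a p.2) * (b p.1 - b p.2) =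
      2 * (Fintype.card ι * ∑ i, a i * b i - (∑ i, a i) * ∑ i, b i) := by
  simp only [Fintype.sum_prod_type, sub_mul, mul_sub, sum_sub_distrib, sum_const, card_univ,
    ← mul_sum, ← sum_mul, nsmul_eq_mul]
  ring

variable [LinearOrder ι]

lemma two_nsmul_sum_filter_lt {M : Type*} [AddCommMonoid M] (f : ι × ι → M)
    (hsymm : ∀ i j, f (i, j) = f (j, i)) (hdiag : ∀ i, f (i, i) = 0) :
    2 • ∑ p ∈ univ.filter (fun p : ι × ι => p.1 < p.2), f p = ∑ p, f p := by
  have hsplit : ∀ p : ι × ι,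
      f p = (if p.1 < p.2 then f p else 0) + if p.2 < p.1 then f p else 0 := by
    rintro ⟨i, j⟩
    rcases lt_trichotomy i j with h | rfl | h
    · simp [h, h.not_gt]
    · simp [hdiag]
    · simp [h, h.not_gt]
  have hswap : ∑ p ∈ univ.filter (fun p : ι × ι => p.2 < p.1), f p =
      ∑ p ∈ univ.filter (fun p : ι × ι => p.1 < p.2), f p :=
    sum_equiv (Equiv.prodComm ι ι) (by simp) fun p _ => hsymm p.1 p.2
  rw [Fintype.sum_congr _ _ hsplit, sum_add_distrib, ← sum_filter, ← sum_filter, hswap, two_nsmul]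

lemma sum_filter_lt_sub_mul_sub {R : Type*} [CommRing R] [IsAddTorsionFree R] (a b : ι → R) :
    ∑ p ∈ univ.filter (fun p : ι × ι => p.1 < p.2), (a p.1 - a p.2) * (b p.1 - b p.2) =
      Fintype.card ι * ∑ i, a i * b i - (∑ i, a i) * ∑ i, b i := by
  refine nsmul_right_injective two_ne_zero ?_
  dsimp only
  rw [two_nsmul_sum_filter_lt _ (fun i j => by ring) (fun i => by ring), sum_prod_sub_mul_sub,
    two_nsmul, two_mul]

end Finset

namespace Matrix

variable {m : Type*}

lemma sum_filter_lt_vecMulVec_sub {ι R : Type*} [Fintype ι] [LinearOrder ι] [CommRing R]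
    [IsAddTorsionFree R] (U : Matrix m ι R) (hU : ∑ j, (fun i => U i j) = 0) :
    ∑ p ∈ univ.filter (fun p : ι × ι => p.1 < p.2),
        vecMulVec ((fun i => U i p.1) - fun i => U i p.2) ((fun i => U i p.1) - fun i => U i p.2)
      = Fintype.card ι • (U * Uᵀ) := by
  ext k l
  have hk : ∑ j, U k j = 0 := by simpa using congrFun hU k
  simp [Matrix.sum_apply, vecMulVec_apply, sum_filter_lt_sub_mul_sub (U k) (U l), hk,
    Matrix.mul_apply, nsmul_eq_mul]

variable [Fintype m]

lemma dotProduct_mulVec_vecMulVec_self {R : Type*} [CommRing R] (u x : m → R) :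
    x ⬝ᵥ vecMulVec u u *ᵥ x = (u ⬝ᵥ x) ^ 2 := by
  rw [vecMulVec_mulVec, op_smul_eq_smul, dotProduct_smul, smul_eq_mul, dotProduct_comm x u, sq]

lemma dotProduct_mulVec_sum_smul_vecMulVec_le {ι R : Type*} [CommRing R] [LinearOrder R]
    [IsStrictOrderedRing R] (s : Finset ι) (w : ι → R) (u : ι → m → R) {c : R}
    (hw : ∀ p ∈ s, w p ≤ c) (x : m → R) :
    x ⬝ᵥ (∑ p ∈ s, w p • vecMulVec (u p) (u p)) *ᵥ x ≤
      c * (x ⬝ᵥ (∑ p ∈ s, vecMulVec (u p) (u p)) *ᵥ x) := by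
  simp only [sum_mulVec, dotProduct_sum, smul_mulVec, dotProduct_smul,
    dotProduct_mulVec_vecMulVec_self, smul_eq_mul, mul_sum]
  exact sum_le_sum fun p hp => mul_le_mul_of_nonneg_right (hw p hp) (sq_nonneg _)

end Matrix

namespace Matrix.IsHermitian

variable {n : Type*} [Fintype n] [DecidableEq n]

section RCLike

variable {𝕜 : Type*} [RCLike 𝕜] {A : Matrix n n 𝕜}

lemma posSemidef_algebraMap_sub (hA : A.IsHermitian) {c : ℝ} (hc : ∀ i, hA.eigenvalues i ≤ c) :
    (algebraMap ℝ (Matrix n n 𝕜) c - A).PosSemidef := by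
  have hdiag : algebraMap ℝ (Matrix n n 𝕜) c - A = Unitary.conjStarAlgAut 𝕜 _
      hA.eigenvectorUnitary (diagonal fun i => ((c - hA.eigenvalues i : ℝ) : 𝕜)) := by
    conv_lhs => rw [hA.spectral_theorem]
    simp only [← diagonal_sub, map_sub, Function.comp_def]
    congr 1
    rw [← smul_one_eq_diagonal, map_smul, map_one, Algebra.algebraMap_eq_smul_one,
      RCLike.real_smul_eq_coe_smul (K := 𝕜)]
  rw [hdiag, Unitary.conjStarAlgAut_apply,
    Unitary.isUnit_coe.posSemidef_star_right_conjugate_iff, posSemidef_diagonal_iff]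
  intro i
  simpa using hc i

end RCLike

variable {A B : Matrix n n ℝ}

lemma dotProduct_mulVec_le_iSup_eigenvalues_mul_s12 (hA : A.IsHermitian) (x : n → ℝ) :
    x ⬝ᵥ A *ᵥ x ≤ (⨆ i, hA.eigenvalues i) * (x ⬝ᵥ x) := by
  have h := (hA.posSemidef_algebraMap_sub fun i ↦
    le_ciSup (Set.finite_range hA.eigenvalues).bddAbove i).dotProduct_mulVec_nonneg x
  simp only [star_trivial, Algebra.algebraMap_eq_smul_one, sub_mulVec, smul_mulVec, one_mulVec,
    dotProduct_sub, dotProduct_smul, smul_eq_mul] at h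
  linarith

lemma eigenvalues_eq_dotProduct_mulVec_s12 (hA : A.IsHermitian) (i : n) :
    hA.eigenvalues i = ⇑(hA.eigenvectorBasis i) ⬝ᵥ A *ᵥ ⇑(hA.eigenvectorBasis i) := by
  simpa using hA.eigenvalues_eq i

lemma dotProduct_eigenvectorBasis_self_s12 (hA : A.IsHermitian) (i : n) :
    ⇑(hA.eigenvectorBasis i) ⬝ᵥ ⇑(hA.eigenvectorBasis i) = 1 := by
  have h := hA.eigenvectorBasis.inner_eq_one i
  rw [EuclideanSpace.inner_eq_star_dotProduct] at h
  simpa [dotProduct_comm] using h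

lemma iSup_eigenvalues_le_mul_iSup_eigenvalues (hA : A.IsHermitian) (hB : B.IsHermitian)
    {c : ℝ} (hc : 0 ≤ c) (h : ∀ x, x ⬝ᵥ A *ᵥ x ≤ c * (x ⬝ᵥ B *ᵥ x)) :
    ⨆ i, hA.eigenvalues i ≤ c * ⨆ i, hB.eigenvalues i := by
  cases isEmpty_or_nonempty n
  · simp
  refine ciSup_le fun i => ?_
  set v := ⇑(hA.eigenvectorBasis i)
  calc hA.eigenvalues i = v ⬝ᵥ A *ᵥ v := hA.eigenvalues_eq_dotProduct_mulVec_s12 i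
    _ ≤ c * (v ⬝ᵥ B *ᵥ v) := h v
    _ ≤ c * ((⨆ j, hB.eigenvalues j) * (v ⬝ᵥ v)) := by
      gcongr
      exact hB.dotProduct_mulVec_le_iSup_eigenvalues_mul_s12 v
    _ = c * ⨆ j, hB.eigenvalues j := by rw [hA.dotProduct_eigenvectorBasis_self_s12, mul_one]

end Matrix.IsHermitian

/-- For centered `U` with `‖U_i − U_j‖₂² ≤ ν` on all pairs, the
largest eigenvalue of `(1/C(n,2)) Σ_{i<j} ‖U_i−U_j‖₂² (U_i−U_j)(U_i−U_j)ᵀ` is at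
most `(νn/C(n,2)) · λ_max(U Uᵀ)`. -/
theorem stmt12 {d n : ℕ} (U : Matrix (Fin d) (Fin n) ℝ) (ν : ℝ)
    (hU : ∑ j : Fin n, (fun i => U i j) = (0 : Fin d → ℝ))
    (hν : ∀ p : Fin n × Fin n, p.1 < p.2 → ∑ i, (U i p.1 - U i p.2) ^ 2 ≤ ν)
    (hM : (((n.choose 2 : ℝ))⁻¹ •
        ∑ p ∈ Finset.univ.filter (fun p : Fin n × Fin n => p.1 < p.2),
          (∑ i, (U i p.1 - U i p.2) ^ 2) •
            vecMulVec ((fun i => U i p.1) - fun i => U i p.2)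
              ((fun i => U i p.1) - fun i => U i p.2)).IsHermitian)
    (hUU : (U * Uᵀ).IsHermitian) :
    (⨆ i, hM.eigenvalues i)
      ≤ ν * (n : ℝ) / (n.choose 2 : ℝ) * ⨆ i, hUU.eigenvalues i := by
  have hc : 0 ≤ ν * n / n.choose 2 := by
    rcases lt_or_ge n 2 with hn | hn
    · -- `C(n,2) = 0`, and division by zero makes the bound `0`
      simp [Nat.choose_eq_zero_of_lt hn]
    · have h01 : (⟨0, by omega⟩ : Fin n) < ⟨1, by omega⟩ := Fin.mk_lt_mk.mpr one_pos
      have hν0 : 0 ≤ ν := (sum_nonneg fun i _ => sq_nonneg _).trans (hν (_, _) h01)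
      positivity
  refine hM.iSup_eigenvalues_le_mul_iSup_eigenvalues hUU hc fun z => ?_
  rw [smul_mulVec, dotProduct_smul, smul_eq_mul]
  refine (mul_le_mul_of_nonneg_left (dotProduct_mulVec_sum_smul_vecMulVec_le _ _ _
    (fun p hp => hν p (mem_filter.mp hp).2) z) (by positivity)).trans_eq ?_
  rw [sum_filter_lt_vecMulVec_sub U hU, smul_mulVec, dotProduct_smul, Fintype.card_fin,
    nsmul_eq_mul]
  ring
end
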